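/- arXiv:1804.03265 — 2 statements merged into one kernel-verified Lean document; each statement's English description precedes it below -/
import Mathlib

section
/- Let η ≥ 1, r > 0, and let R : [t₁, t₂] → ℝ be continuously differentiable with R(t₁) ≤ r⁻², satisfying R'(u) ≤ η R(u)² whenever R(u) ≥ r⁻². If η(t₂ - t₁) < r², then R(u) ≤ 1/(r² - η(u - t₁)) for all u ∈ [t₁, t₂]. -/
/-!
The comparison function `B u = (r² - η (u - t₁))⁻¹` solves `B' = η B²` with `B t₁ = r⁻²`, and
`B ≥ r⁻²` on `[t₁, t₂]`. For the strictly faster growth rate `η + ε` the barrier argument applies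
directly: at a first touching point `R = B_ε ≥ r⁻²`, so `R' ≤ η R² < (η + ε) B_ε² = B_ε'`, which is
impossible. Letting `ε → 0⁺` gives the bound for `η` itself.
-/

open Set Filter Topology

lemma hasDerivAt_inv_sub_mul_sub (c η t₁ u : ℝ) (h : c - η * (u - t₁) ≠ 0) :
    HasDerivAt (fun v => (c - η * (v - t₁))⁻¹) (η * ((c - η * (u - t₁))⁻¹) ^ 2) u := by
  have hden : HasDerivAt (fun v => c - η * (v - t₁)) (-η) u := by
    simpa using (((hasDerivAt_id u).sub_const t₁).const_mul η).const_sub c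
  simpa [div_eq_mul_inv, inv_pow] using hden.fun_inv h

section Comparison

variable {η c t₁ t₂ : ℝ} {R R' : ℝ → ℝ}

lemma sub_mul_sub_pos (hη : 0 ≤ η) (hsmall : η * (t₂ - t₁) < c) {u : ℝ} (hu : u ∈ Icc t₁ t₂) :
    0 < c - η * (u - t₁) := by
  nlinarith [hu.2]

lemma le_inv_sub_mul_sub_of_deriv_lt (hη : 0 ≤ η) (hsmall : η * (t₂ - t₁) < c)
    (hderiv : ∀ u ∈ Icc t₁ t₂, HasDerivAt R (R' u) u) (hinit : R t₁ ≤ c⁻¹)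
    (hbound : ∀ u ∈ Icc t₁ t₂, c⁻¹ ≤ R u → R' u < η * R u ^ 2) :
    ∀ u ∈ Icc t₁ t₂, R u ≤ (c - η * (u - t₁))⁻¹ := by
  have hB : ∀ u ∈ Icc t₁ t₂, HasDerivAt (fun v => (c - η * (v - t₁))⁻¹)
      (η * ((c - η * (u - t₁))⁻¹) ^ 2) u := fun u hu =>
    hasDerivAt_inv_sub_mul_sub c η t₁ u (sub_mul_sub_pos hη hsmall hu).ne'
  refine image_le_of_deriv_right_lt_deriv_boundary'
    (fun u hu => (hderiv u hu).continuousAt.continuousWithinAt)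
    (fun u hu => (hderiv u (Ico_subset_Icc_self hu)).hasDerivWithinAt)
    (by simpa using hinit)
    (fun u hu => (hB u hu).continuousAt.continuousWithinAt)
    (fun u hu => (hB u (Ico_subset_Icc_self hu)).hasDerivWithinAt) ?_
  intro u hu htouch
  have hu' := Ico_subset_Icc_self hu
  have hB_ge : c⁻¹ ≤ (c - η * (u - t₁))⁻¹ :=
    inv_anti₀ (sub_mul_sub_pos hη hsmall hu') (by nlinarith [hu.1])
  simpa [htouch] using hbound u hu' (htouch ▸ hB_ge)

lemma le_inv_sub_mul_sub_of_deriv_le (hη : 0 ≤ η) (hsmall : η * (t₂ - t₁) < c)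
    (hderiv : ∀ u ∈ Icc t₁ t₂, HasDerivAt R (R' u) u) (hinit : R t₁ ≤ c⁻¹)
    (hbound : ∀ u ∈ Icc t₁ t₂, c⁻¹ ≤ R u → R' u ≤ η * R u ^ 2) :
    ∀ u ∈ Icc t₁ t₂, R u ≤ (c - η * (u - t₁))⁻¹ := by
  intro u hu
  have hc : 0 < c := by nlinarith [hu.1, hu.2]
  have hsmall_eventually : ∀ᶠ ε in 𝓝[>] (0 : ℝ), (η + ε) * (t₂ - t₁) < c := by
    have hcont : ContinuousAt (fun ε : ℝ => (η + ε) * (t₂ - t₁)) 0 := by fun_prop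
    exact nhdsWithin_le_nhds (hcont.eventually_lt continuousAt_const (by simpa using hsmall))
  have hbound_eventually : ∀ᶠ ε in 𝓝[>] (0 : ℝ), R u ≤ (c - (η + ε) * (u - t₁))⁻¹ := by
    filter_upwards [hsmall_eventually, self_mem_nhdsWithin] with ε hε (hε_pos : 0 < ε)
    refine le_inv_sub_mul_sub_of_deriv_lt (by linarith) hε hderiv hinit (fun v hv hRv => ?_) u hu
    have hRv_pos : 0 < R v ^ 2 := pow_pos ((inv_pos.2 hc).trans_le hRv) 2
    nlinarith [hbound v hv hRv]
  have hlim : Tendsto (fun ε : ℝ => (c - (η + ε) * (u - t₁))⁻¹) (𝓝[>] 0)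
      (𝓝 (c - η * (u - t₁))⁻¹) := by
    have hcont : ContinuousAt (fun ε : ℝ => (c - (η + ε) * (u - t₁))⁻¹) 0 :=
      (by fun_prop : ContinuousAt (fun ε : ℝ => c - (η + ε) * (u - t₁)) 0).inv₀
        (by simpa using (sub_mul_sub_pos hη hsmall hu).ne')
    simpa using hcont.tendsto.mono_left nhdsWithin_le_nhds
  exact ge_of_tendsto hlim hbound_eventually

end Comparison

theorem stmt_7_general (η r t₁ t₂ : ℝ) (hη : 1 ≤ η)
    (hsmall : η * (t₂ - t₁) < r^2)
    (R R' : ℝ → ℝ)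
    (hderiv : ∀ u ∈ Set.Icc t₁ t₂, HasDerivAt R (R' u) u)
    (hinit : R t₁ ≤ r⁻¹^2)
    (hbound : ∀ u ∈ Set.Icc t₁ t₂, r⁻¹^2 ≤ R u → R' u ≤ η * (R u)^2) :
    ∀ u ∈ Set.Icc t₁ t₂, R u ≤ 1 / (r^2 - η * (u - t₁)) := by
  simp only [inv_pow, one_div] at hinit hbound ⊢
  exact le_inv_sub_mul_sub_of_deriv_le (by linarith) hsmall hderiv hinit hbound

theorem stmt_7 (η r t₁ t₂ : ℝ) (hη : 1 ≤ η) (hr : 0 < r) (ht : t₁ ≤ t₂)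
    (hsmall : η * (t₂ - t₁) < r^2)
    (R R' : ℝ → ℝ)
    (hderiv : ∀ u ∈ Set.Icc t₁ t₂, HasDerivAt R (R' u) u)
    (hcont : ContinuousOn R' (Set.Icc t₁ t₂))
    (hinit : R t₁ ≤ r⁻¹^2)
    (hbound : ∀ u ∈ Set.Icc t₁ t₂, r⁻¹^2 ≤ R u → R' u ≤ η * (R u)^2) :
    ∀ u ∈ Set.Icc t₁ t₂, R u ≤ 1 / (r^2 - η * (u - t₁)) :=
  stmt_7_general η r t₁ t₂ hη hsmall R R' hderiv hinit hbound
end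

section
/- Let η ≥ 1, r > 0, t₁ < t₂ with η(t₂-t₁) < r², and let R : [t₁, t₂] → ℝ be continuously differentiable with r⁻² < R(t₁), satisfying R'(u) ≤ η R(u)² whenever R(u) ≥ r⁻². If R(t₁)·η·(t₂-t₁) < 1, then R(u) ≤ 1/(1/R(t₁) - η(u - t₁)) for all u ∈ [t₁, t₂]. -/
/-!
`B(u) = 1 / (1/R(t₁) - η (u - t₁))` solves the Riccati equation `B' = η B²` with `B(t₁) = R(t₁)`,
and it stays above `R(t₁) > r⁻²`, so wherever `R` touches `B` the differential inequality is in
force. Barriers with a slightly larger slope `k > η` are therefore never crossed (fencing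
argument), and letting `k → η` gives the bound.
-/

open Set Filter Topology

theorem hasDerivAt_inv_sub_mul_sub_s8 {c k a x : ℝ} (hx : c - k * (x - a) ≠ 0) :
    HasDerivAt (fun y => (c - k * (y - a))⁻¹) (k * (c - k * (x - a))⁻¹ ^ 2) x := by
  have hlin : HasDerivAt (fun y => c - k * (y - a)) (-k) x := by
    simpa using (((hasDerivAt_id x).sub_const a).const_mul k).const_sub c
  have h := hlin.inv hx
  rwa [neg_neg, div_eq_mul_inv, ← inv_pow] at h

theorem image_le_inv_sub_mul_sub_of_deriv_lt {f f' : ℝ → ℝ} {a b c k : ℝ}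
    (hf : ContinuousOn f (Icc a b)) (hf' : ∀ x ∈ Ico a b, HasDerivWithinAt f (f' x) (Ici x) x)
    (ha : f a ≤ c⁻¹) (hpos : ∀ x ∈ Icc a b, 0 < c - k * (x - a))
    (bound : ∀ x ∈ Ico a b, f x = (c - k * (x - a))⁻¹ → f' x < k * f x ^ 2) :
    ∀ x ∈ Icc a b, f x ≤ (c - k * (x - a))⁻¹ := by
  have hB : ∀ x ∈ Icc a b, HasDerivAt (fun y => (c - k * (y - a))⁻¹)
      (k * (c - k * (x - a))⁻¹ ^ 2) x :=
    fun x hx => hasDerivAt_inv_sub_mul_sub_s8 (hpos x hx).ne'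
  refine fun x hx => image_le_of_deriv_right_lt_deriv_boundary' hf hf' (by simpa using ha)
    (fun y hy => (hB y hy).continuousAt.continuousWithinAt)
    (fun y hy => (hB y (Ico_subset_Icc_self hy)).hasDerivWithinAt) ?_ hx
  intro y hy hfy
  rw [← hfy]
  exact bound y hy hfy

theorem image_le_inv_sub_mul_sub_of_deriv_le {f f' : ℝ → ℝ} {a b c η θ : ℝ}
    (hf : ContinuousOn f (Icc a b)) (hf' : ∀ x ∈ Ico a b, HasDerivWithinAt f (f' x) (Ici x) x)
    (hη : 0 ≤ η) (ha : f a ≤ c⁻¹) (hθ : θ ≤ c⁻¹) (hb : η * (b - a) < c)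
    (bound : ∀ x ∈ Ico a b, θ ≤ f x → f' x ≤ η * f x ^ 2) :
    ∀ x ∈ Icc a b, f x ≤ (c - η * (x - a))⁻¹ := by
  have barrier : ∀ k, η < k → k * (b - a) < c → ∀ x ∈ Icc a b, f x ≤ (c - k * (x - a))⁻¹ := by
    intro k hk hkb
    have hk0 : 0 ≤ k := hη.trans hk.le
    have hpos : ∀ x ∈ Icc a b, 0 < c - k * (x - a) := fun x hx => by
      nlinarith [mul_le_mul_of_nonneg_left (sub_le_sub_right hx.2 a) hk0]
    refine image_le_inv_sub_mul_sub_of_deriv_lt hf hf' ha hpos fun x hx hfx => ?_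
    have hx' := Ico_subset_Icc_self hx
    -- the barrier only grows, so at a touching point `f` is above `c⁻¹ ≥ θ`
    have hc_le : c⁻¹ ≤ f x := hfx ▸ inv_anti₀ (hpos x hx') (by nlinarith [hx.1])
    have hfx_pos : 0 < f x := hfx ▸ inv_pos.2 (hpos x hx')
    calc f' x ≤ η * f x ^ 2 := bound x hx (hθ.trans hc_le)
      _ < k * f x ^ 2 := by gcongr
  intro x hx
  have hpos : 0 < c - η * (x - a) := by
    nlinarith [mul_le_mul_of_nonneg_left (sub_le_sub_right hx.2 a) hη]
  have hlim : Tendsto (fun k => (c - k * (x - a))⁻¹) (𝓝[>] η) (𝓝 (c - η * (x - a))⁻¹) :=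
    ((continuous_const.sub (continuous_id.mul continuous_const)).continuousAt.inv₀
      hpos.ne').mono_left nhdsWithin_le_nhds
  have hsmall : ∀ᶠ k in 𝓝[>] η, k * (b - a) < c :=
    ((continuous_id.mul continuous_const).continuousAt.eventually_lt_const hb).filter_mono
      nhdsWithin_le_nhds
  refine ge_of_tendsto hlim ?_
  filter_upwards [self_mem_nhdsWithin, hsmall] with k hk hkb
  exact barrier k hk hkb x hx

theorem stmt_8_general (η r t₁ t₂ : ℝ) (hη : 1 ≤ η)
    (R R' : ℝ → ℝ)
    (hderiv : ∀ u ∈ Set.Icc t₁ t₂, HasDerivAt R (R' u) u)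
    (hinit : r⁻¹^2 < R t₁)
    (hbound : ∀ u ∈ Set.Icc t₁ t₂, r⁻¹^2 ≤ R u → R' u ≤ η * (R u)^2)
    (hsmall' : R t₁ * η * (t₂ - t₁) < 1) :
    ∀ u ∈ Set.Icc t₁ t₂, R u ≤ 1 / (1 / R t₁ - η * (u - t₁)) := by
  have hR₀ : 0 < R t₁ := (sq_nonneg r⁻¹).trans_lt hinit
  have hinv : (1 / R t₁)⁻¹ = R t₁ := by rw [one_div, inv_inv]
  intro u hu
  rw [one_div (_ - _)]
  refine image_le_inv_sub_mul_sub_of_deriv_le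
    (fun x hx => (hderiv x hx).continuousAt.continuousWithinAt)
    (fun x hx => (hderiv x (Ico_subset_Icc_self hx)).hasDerivWithinAt)
    (by linarith) hinv.ge (by rw [hinv]; exact hinit.le) ?_
    (fun x hx => hbound x (Ico_subset_Icc_self hx)) u hu
  rwa [lt_div_iff₀ hR₀, mul_comm, ← mul_assoc]

theorem stmt_8 (η r t₁ t₂ : ℝ) (hη : 1 ≤ η) (hr : 0 < r) (ht : t₁ < t₂)
    (hsmall : η * (t₂ - t₁) < r^2)
    (R R' : ℝ → ℝ)
    (hderiv : ∀ u ∈ Set.Icc t₁ t₂, HasDerivAt R (R' u) u)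
    (hcont : ContinuousOn R' (Set.Icc t₁ t₂))
    (hinit : r⁻¹^2 < R t₁)
    (hbound : ∀ u ∈ Set.Icc t₁ t₂, r⁻¹^2 ≤ R u → R' u ≤ η * (R u)^2)
    (hsmall' : R t₁ * η * (t₂ - t₁) < 1) :
    ∀ u ∈ Set.Icc t₁ t₂, R u ≤ 1 / (1 / R t₁ - η * (u - t₁)) :=
  stmt_8_general η r t₁ t₂ hη R R' hderiv hinit hbound hsmall'
end
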